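/- arXiv:alg-geom/9705027 — 3 statements merged into one kernel-verified Lean document; each statement's English description precedes it below -/
import Mathlib

section
/- Let r, d, r₁, d₁, l, p, q, s be integers with d·r₁ − d₁·r = 1, p·r₁ − q·l = −1 and l > 0. Set k := r₁·(q·r + r₁·s) − r², v := (l·r, l·d, l·((1 + d·r₁)·d₁·s + d²·q·r₁ − r·d²) − p) and v₁ := (r₁, d₁, r₁·(−d² + d₁²·s) + d₁²·r·q + 2d). Then, with respect to the Mukai pairing determined by k, one has ⟨v₁, v₁⟩ = −2, ⟨v, v⟩ = 2l·(l·s + r·p), and ⟨v₁, v⟩ = −1. -/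
/-- The Mukai pairing on `ℤ³` determined by an integer `k`:
`⟨(r, d, a), (r', d', a')⟩ = 2k d d' - r a' - r' a`. -/
def mukaiPairing (k : ℤ) (v w : ℤ × ℤ × ℤ) : ℤ :=
  2 * k * v.2.1 * w.2.1 - v.1 * w.2.2 - w.1 * v.2.2

/-- With `d r₁ - d₁ r = 1`, `p r₁ - q l = -1`, `l > 0`,
`k = r₁ (q r + r₁ s) - r²`,
`v = (l r, l d, l ((1 + d r₁) d₁ s + d² q r₁ - r d²) - p)` and
`v₁ = (r₁, d₁, r₁ (-d² + d₁² s) + d₁² r q + 2 d)`, one has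
`⟨v₁, v₁⟩ = -2`, `⟨v, v⟩ = 2 l (l s + r p)` and `⟨v₁, v⟩ = -1`. -/
theorem mukai_vectors_nonprimitive_case (r d r₁ d₁ l p q s : ℤ)
    (h₁ : d * r₁ - d₁ * r = 1) (h₂ : p * r₁ - q * l = -1) (hl : 0 < l)
    (k : ℤ) (hk : k = r₁ * (q * r + r₁ * s) - r ^ 2)
    (v v₁ : ℤ × ℤ × ℤ)
    (hv : v = (l * r, l * d,
      l * ((1 + d * r₁) * d₁ * s + d ^ 2 * q * r₁ - r * d ^ 2) - p))
    (hv₁ : v₁ = (r₁, d₁, r₁ * (-d ^ 2 + d₁ ^ 2 * s) + d₁ ^ 2 * r * q + 2 * d)) :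
    mukaiPairing k v₁ v₁ = -2 ∧ mukaiPairing k v v = 2 * l * (l * s + r * p) ∧
      mukaiPairing k v₁ v = -1 := by
  subst hk hv hv₁
  refine ⟨?_, ?_, ?_⟩ <;> simp only [mukaiPairing]
  · linear_combination (2*d*r₁ + 2*r*d₁ - 2) * h₁
  · linear_combination (2*l^2*s + 2*d*r₁*l^2*s) * h₁
  · linear_combination (r₁*d₁*l*s - d*r₁*l*q + r*d₁*l*q + 2*r*d*l - l*q) * h₁ + h₂
end

section
/- Let t be a positive integer, l₁, …, l_t positive integers with sum l, and set k := l − max_i lᵢ. Let q₁, …, q_t be rational numbers with qᵢ ≥ −2 for all i and q_{i₀} ≥ 0 for some index i₀, and set Q := Σᵢ qᵢ/(2lᵢ). Then Σᵢ ((l − lᵢ)/(2lᵢ))·qᵢ ≥ k·Q − (l − 1 − k)·k. -/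
/-! Write `M = max lᵢ`, so that `L - k = M`. Subtracting `k Q` turns the claim into
`Σᵢ (M - lᵢ)/(2lᵢ) · qᵢ ≥ -(M - 1) k`. Every coefficient `(M - lᵢ)/(2lᵢ)` is nonnegative, so
the term at `i₀` is nonnegative and, since `qᵢ ≥ -2` and `lᵢ ≥ 1`, each of the other `t - 1`
terms is at least `-(M - lᵢ)/lᵢ ≥ -(M - 1)`. Finally `t - 1 ≤ k`, because the `t - 1`
non-maximal `lᵢ` are positive integers summing to `k`. -/

open Finset

section OrderedRing

variable {ι R : Type*} [Ring R] [LinearOrder R] [IsOrderedRing R]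

theorem card_sub_one_le_sum_sub_sup' (s : Finset ι) (hs : s.Nonempty) (l : ι → R)
    (hl : ∀ i ∈ s, 1 ≤ l i) : (#s : R) - 1 ≤ ∑ i ∈ s, l i - s.sup' hs l := by
  classical
  obtain ⟨j, hj, hsup⟩ := s.exists_mem_eq_sup' hs l
  have hrest : (#(s.erase j) : R) ≤ ∑ i ∈ s.erase j, l i := by
    simpa using card_nsmul_le_sum (s.erase j) l 1 fun i hi => hl i (mem_of_mem_erase hi)
  rw [cast_card_erase_of_mem hj] at hrest
  rwa [hsup, ← add_sum_erase s l hj, add_sub_cancel_left]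

theorem neg_card_sub_one_mul_le_sum (s : Finset ι) {i₀ : ι} (hi₀ : i₀ ∈ s)
    (f : ι → R) (B : R) (hf : ∀ i ∈ s, i ≠ i₀ → -B ≤ f i) (hf₀ : 0 ≤ f i₀) :
    -(((#s : R) - 1) * B) ≤ ∑ i ∈ s, f i := by
  classical
  have hrest : #(s.erase i₀) • -B ≤ ∑ i ∈ s.erase i₀, f i :=
    card_nsmul_le_sum _ f _ fun i hi => hf i (mem_of_mem_erase hi) (ne_of_mem_erase hi)
  rw [nsmul_eq_mul, cast_card_erase_of_mem hi₀, mul_neg] at hrest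
  rw [← add_sum_erase s f hi₀]
  exact hrest.trans (le_add_of_nonneg_left hf₀)

end OrderedRing

theorem neg_sub_one_le_sub_div_mul {K : Type*} [Field K] [LinearOrder K] [IsStrictOrderedRing K]
    {l M q : K} (hl : 1 ≤ l) (hlM : l ≤ M) (hq : -2 ≤ q) :
    -(M - 1) ≤ (M - l) / (2 * l) * q := by
  have hcoeff : 0 ≤ (M - l) / (2 * l) := by
    apply div_nonneg <;> linarith
  have hcoeff_le : (M - l) / (2 * l) ≤ (M - 1) / 2 := by
    rw [div_le_div_iff₀ (by linarith) two_pos]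
    nlinarith
  nlinarith

/-- Let `l₁, …, l_t` be positive integers with sum `L` and
`k = L - max lᵢ`. If `qᵢ ≥ -2` for all `i` and `q_{i₀} ≥ 0` for some `i₀`, then,
with `Q = Σ qᵢ/(2lᵢ)`, one has
`Σᵢ ((L - lᵢ)/(2lᵢ)) qᵢ ≥ k Q - (L - 1 - k) k`. -/
theorem jordan_holder_estimate (t : ℕ) (ht : 0 < t)
    (l : Fin t → ℤ) (hl : ∀ i, 0 < l i)
    (L k : ℤ) (hL : L = ∑ i, l i)
    (hk : k = L - Finset.univ.sup' ⟨⟨0, ht⟩, Finset.mem_univ _⟩ l)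
    (q : Fin t → ℚ) (hq : ∀ i, -2 ≤ q i) (i₀ : Fin t) (hq0 : 0 ≤ q i₀) :
    (k : ℚ) * (∑ i, q i / (2 * (l i : ℚ))) - ((L : ℚ) - 1 - (k : ℚ)) * (k : ℚ)
      ≤ ∑ i, ((L - l i : ℤ) : ℚ) / (2 * (l i : ℚ)) * q i := by
  set M := Finset.univ.sup' ⟨⟨0, ht⟩, Finset.mem_univ _⟩ l
  have hl₁ : ∀ i, (1 : ℚ) ≤ l i := fun i => by exact_mod_cast hl i
  have hlM : ∀ i, (l i : ℚ) ≤ M := fun i => by exact_mod_cast le_sup' l (mem_univ i)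
  have hkt : (t : ℚ) - 1 ≤ k := by
    have := card_sub_one_le_sum_sub_sup' univ ⟨⟨0, ht⟩, mem_univ _⟩ l fun i _ => hl i
    rw [card_univ, Fintype.card_fin, ← hL, ← hk] at this
    exact_mod_cast this
  have hterms := neg_card_sub_one_mul_le_sum univ (mem_univ i₀)
    (fun i => ((M : ℚ) - l i) / (2 * l i) * q i) ((M : ℚ) - 1)
    (fun i _ _ => neg_sub_one_le_sub_div_mul (hl₁ i) (hlM i) (hq i))
    (mul_nonneg (div_nonneg (by linarith [hlM i₀]) (by linarith [hl₁ i₀])) hq0)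
  have hsplit : ∑ i, ((L - l i : ℤ) : ℚ) / (2 * (l i : ℚ)) * q i
      - k * ∑ i, q i / (2 * (l i : ℚ)) = ∑ i, ((M : ℚ) - l i) / (2 * l i) * q i := by
    rw [mul_sum, ← sum_sub_distrib]
    refine sum_congr rfl fun i _ => ?_
    rw [hk]
    push_cast
    ring
  have hM₁ : (1 : ℚ) ≤ M := (hl₁ i₀).trans (hlM i₀)
  have hkM := mul_le_mul_of_nonneg_right hkt (sub_nonneg.2 hM₁)
  have hLM : (L : ℚ) = M + k := by rw [hk]; push_cast; ring
  simp only [card_univ, Fintype.card_fin] at hterms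
  rw [hLM]
  linarith
end

section
/- Let Λ := ℤC ⊕ ℤf be the rank-2 lattice with symmetric bilinear form B determined by B(C, C) = −2, B(C, f) = 1, B(f, f) = 0, and let M := ℤ × Λ × ℤ carry the Mukai pairing ⟨(r, ξ, a), (r', ξ', a')⟩ := B(ξ, ξ') − r·a' − r'·a. For N ∈ Λ with B(N, N) = 0, let T_N(r, ξ, a) := (r, ξ + rN, a + B(ξ, N)). Let l, r be positive integers and k₁, k₂, a₁, a₂ integers with a₁ ≡ a₂ (mod l), and set vᵢ := (l·r, l·(C + kᵢ·f), aᵢ) for i = 1, 2. If ⟨v₁, v₁⟩ = ⟨v₂, v₂⟩, then T_{n·f}(v₂) = v₁, where n := (a₁ − a₂)/l. -/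
/-- The bilinear form `B` on `Λ = ℤC ⊕ ℤf` (coordinates: `C`-coefficient,
`f`-coefficient) with `B(C,C) = -2`, `B(C,f) = 1`, `B(f,f) = 0`. -/
def ellB (x y : ℤ × ℤ) : ℤ := -2 * x.1 * y.1 + x.1 * y.2 + x.2 * y.1

/-- The Mukai pairing on `M = ℤ × Λ × ℤ`:
`⟨(r, ξ, a), (r', ξ', a')⟩ = B(ξ, ξ') - r a' - r' a`. -/
def ellMukai (v w : ℤ × (ℤ × ℤ) × ℤ) : ℤ :=
  ellB v.2.1 w.2.1 - v.1 * w.2.2 - w.1 * v.2.2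

/-- For `N ∈ Λ` with `B(N,N) = 0`, the map
`T_N(r, ξ, a) = (r, ξ + r N, a + B(ξ, N))`. -/
def ellT (N : ℤ × ℤ) (v : ℤ × (ℤ × ℤ) × ℤ) : ℤ × (ℤ × ℤ) × ℤ :=
  (v.1, (v.2.1.1 + v.1 * N.1, v.2.1.2 + v.1 * N.2), v.2.2 + ellB v.2.1 N)

/-- For positive integers `l, r`, integers `k₁, k₂, a₁, a₂` with
`a₁ ≡ a₂ (mod l)`, and `vᵢ = (l r, l (C + kᵢ f), aᵢ)`, if
`⟨v₁, v₁⟩ = ⟨v₂, v₂⟩` then `T_{n f}(v₂) = v₁` where `n = (a₁ - a₂)/l`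
(note `B(n f, n f) = 0`). -/
theorem elliptic_translation (l r k₁ k₂ a₁ a₂ : ℤ) (hl : 0 < l) (hr : 0 < r)
    (hmod : a₁ ≡ a₂ [ZMOD l])
    (v₁ v₂ : ℤ × (ℤ × ℤ) × ℤ)
    (hv₁ : v₁ = (l * r, (l, l * k₁), a₁))
    (hv₂ : v₂ = (l * r, (l, l * k₂), a₂))
    (hsq : ellMukai v₁ v₁ = ellMukai v₂ v₂) :
    ellT (0, (a₁ - a₂) / l) v₂ = v₁ := by
  have hdvd : l ∣ a₁ - a₂ := hmod.symm.dvd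
  obtain ⟨n, hn⟩ := hdvd
  have hln : (a₁ - a₂) / l = n := by rw [hn, Int.mul_ediv_cancel_left _ hl.ne']
  subst hv₁ hv₂
  simp only [ellMukai, ellB] at hsq
  have key : l * (k₁ - k₂) = r * (a₁ - a₂) := by nlinarith
  rw [hn] at key
  have hk : k₁ - k₂ = r * n := by
    have := mul_left_cancel₀ hl.ne' (by linarith [key] : l * (k₁ - k₂) = l * (r * n))
    linarith
  simp only [ellT, ellB, hln]
  refine Prod.ext rfl (Prod.ext (Prod.ext ?_ ?_) ?_) <;> simp <;> nlinarith
end
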